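/- arXiv:2211.13279 — 4 statements merged into one kernel-verified Lean document; each statement's English description precedes it below -/
import Mathlib

section
/- Let λ ≤ Λ be positive constants and A : ℝᵈ → Sym(d) a matrix field satisfying λ I ≤ A(x) ≤ Λ I for all x. For κ, θ > 0 define f_{κ,θ}(t,x) = t^{-κ} exp(-|x|²/(θ t)) on (0,∞) × ℝᵈ. If θ ≥ 4Λ and 0 ≤ κ ≤ 2λd/θ, then f_{κ,θ} is a supersolution of the parabolic equation ∂_t u - tr(A(x) D²u) = 0, i.e. ∂_t f_{κ,θ}(t,x) - tr(A(x) D² f_{κ,θ}(t,x)) ≥ 0 for all (t,x) ∈ (0,∞) × ℝᵈ. -/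
open Real MeasureTheory

/-- Second spatial partial derivative `∂_i ∂_j g (x)`. -/
noncomputable def hessEntry (d : ℕ) (g : EuclideanSpace ℝ (Fin d) → ℝ)
    (x : EuclideanSpace ℝ (Fin d)) (i j : Fin d) : ℝ :=
  fderiv ℝ (fun y => fderiv ℝ g y (EuclideanSpace.single j 1)) x (EuclideanSpace.single i 1)

lemma hasFDerivAt_gauss {d : ℕ} (b c : ℝ) (x : EuclideanSpace ℝ (Fin d)) :
    HasFDerivAt (fun y : EuclideanSpace ℝ (Fin d) => c * Real.exp (b * ‖y‖ ^ 2))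
      ((c * Real.exp (b * ‖x‖ ^ 2) * (2 * b)) • innerSL ℝ x) x := by
  have h1 : HasFDerivAt (fun y : EuclideanSpace ℝ (Fin d) => ‖y‖ ^ 2)
      (2 • (innerSL ℝ x)) x := (hasStrictFDerivAt_norm_sq x).hasFDerivAt
  have h2 := ((h1.const_mul b).exp).const_mul c
  have e : (c * Real.exp (b * ‖x‖ ^ 2) * (2 * b)) • innerSL ℝ x
      = c • Real.exp (b * ‖x‖ ^ 2) • b • (2 • innerSL ℝ x) := by
    ext v
    simp [Real.exp_ne_zero]
    ring
  rw [e]; exact h2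

lemma fderiv_gauss_apply {d : ℕ} (b c : ℝ) (y : EuclideanSpace ℝ (Fin d)) (j : Fin d) :
    fderiv ℝ (fun y : EuclideanSpace ℝ (Fin d) => c * Real.exp (b * ‖y‖ ^ 2)) y
      (EuclideanSpace.single j 1)
      = c * Real.exp (b * ‖y‖ ^ 2) * (2 * b) * y j := by
  rw [(hasFDerivAt_gauss b c y).fderiv]
  simp [real_inner_comm, EuclideanSpace.inner_single_right]

lemma hessEntry_gauss {d : ℕ} (b c : ℝ) (x : EuclideanSpace ℝ (Fin d)) (i j : Fin d) :
    hessEntry d (fun y => c * Real.exp (b * ‖y‖ ^ 2)) x i j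
      = c * Real.exp (b * ‖x‖ ^ 2) *
        (2 * b * (if i = j then 1 else 0) + 4 * b ^ 2 * x i * x j) := by
  unfold hessEntry
  have hfe : (fun y : EuclideanSpace ℝ (Fin d) =>
      fderiv ℝ (fun y : EuclideanSpace ℝ (Fin d) => c * Real.exp (b * ‖y‖ ^ 2)) y
        (EuclideanSpace.single j 1))
      = fun y : EuclideanSpace ℝ (Fin d) => (c * Real.exp (b * ‖y‖ ^ 2) * (2 * b)) * y j :=
    funext fun y => fderiv_gauss_apply b c y j
  rw [hfe]
  have h1 : HasFDerivAt (fun y : EuclideanSpace ℝ (Fin d) => c * Real.exp (b * ‖y‖ ^ 2) * (2 * b))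
      ((2 * b) • ((c * Real.exp (b * ‖x‖ ^ 2) * (2 * b)) • innerSL ℝ x)) x :=
    (hasFDerivAt_gauss b c x).mul_const (2 * b)
  have h2 : HasFDerivAt (fun y : EuclideanSpace ℝ (Fin d) => y j)
      (EuclideanSpace.proj j : EuclideanSpace ℝ (Fin d) →L[ℝ] ℝ) x :=
    (EuclideanSpace.proj (𝕜 := ℝ) j).hasFDerivAt
  have h3 : HasFDerivAt (fun y : EuclideanSpace ℝ (Fin d) =>
      c * Real.exp (b * ‖y‖ ^ 2) * (2 * b) * y j) _ x := h1.mul h2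
  rw [h3.fderiv]
  simp [real_inner_comm, EuclideanSpace.single_apply, EuclideanSpace.inner_single_right]
  rcases eq_or_ne i j with h | h
  · subst h; simp; ring
  · simp [h, h.symm]; ring

lemma hasDerivAt_time (κ θ a t : ℝ) (ht : 0 < t) :
    HasDerivAt (fun s : ℝ => s ^ (-κ) * Real.exp (-a / (θ * s)))
      ((-κ * t ^ (-κ - 1)) * Real.exp (-a / (θ * t))
        + t ^ (-κ) * (Real.exp (-a / (θ * t)) * (a / θ * (t ^ 2)⁻¹))) t := by
  have h1 : HasDerivAt (fun s : ℝ => s ^ (-κ)) (-κ * t ^ (-κ - 1)) t := by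
    simpa using Real.hasDerivAt_rpow_const (p := -κ) (Or.inl ht.ne')
  have h2 : HasDerivAt (fun s : ℝ => -a / (θ * s)) (a / θ * (t ^ 2)⁻¹) t := by
    have h3 : HasDerivAt (fun s : ℝ => s⁻¹) (-(t ^ 2)⁻¹) t := hasDerivAt_inv ht.ne'
    have h4 := h3.const_mul (-a / θ)
    have he : (fun s : ℝ => -a / (θ * s)) = fun s : ℝ => (-a / θ) * s⁻¹ := by
      funext s; rw [← div_div, div_eq_mul_inv]
    rw [he]
    rw [show a / θ * (t ^ 2)⁻¹ = -a / θ * -(t ^ 2)⁻¹ by ring]; exact h4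
  exact h1.mul h2.exp

/-- If `θ ≥ 4Λ` and `0 ≤ κ ≤ 2λd/θ`, then `f_{κ,θ}(t,x) = t^{-κ} exp(-|x|²/(θt))`
is a supersolution of `∂_t u - tr(A(x) D²u) = 0`. -/
theorem gaussian_supersolution
    (d : ℕ) (hd : 1 ≤ d) (lam Lam : ℝ) (hlam : 0 < lam) (hle : lam ≤ Lam)
    (A : EuclideanSpace ℝ (Fin d) → Matrix (Fin d) (Fin d) ℝ)
    (hAsymm : ∀ x i j, A x i j = A x j i)
    (hellip : ∀ (x v : EuclideanSpace ℝ (Fin d)),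
      lam * ‖v‖ ^ 2 ≤ ∑ i, ∑ j, A x i j * v i * v j ∧
        ∑ i, ∑ j, A x i j * v i * v j ≤ Lam * ‖v‖ ^ 2)
    (κ θ : ℝ) (hθ : 4 * Lam ≤ θ) (hκ0 : 0 ≤ κ) (hκ : κ ≤ 2 * lam * d / θ)
    (f : ℝ → EuclideanSpace ℝ (Fin d) → ℝ)
    (hf : ∀ t x, f t x = t ^ (-κ) * Real.exp (-‖x‖ ^ 2 / (θ * t))) :
    ∀ t : ℝ, 0 < t → ∀ x : EuclideanSpace ℝ (Fin d),
      0 ≤ deriv (fun s => f s x) t - ∑ i, ∑ j, A x i j * hessEntry d (f t) x i j := by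
  intro t ht x
  have hθpos : 0 < θ := lt_of_lt_of_le (by linarith) hθ
  -- time derivative
  have hfun : (fun s => f s x) = fun s : ℝ => s ^ (-κ) * Real.exp (-‖x‖ ^ 2 / (θ * s)) :=
    funext fun s => hf s x
  have hD : deriv (fun s => f s x) t
      = (-κ * t ^ (-κ - 1)) * Real.exp (-‖x‖ ^ 2 / (θ * t))
        + t ^ (-κ) * (Real.exp (-‖x‖ ^ 2 / (θ * t)) * (‖x‖ ^ 2 / θ * (t ^ 2)⁻¹)) := by
    rw [hfun, (hasDerivAt_time κ θ (‖x‖ ^ 2) t ht).deriv]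
  -- spatial form
  have hft : f t = fun y : EuclideanSpace ℝ (Fin d) =>
      (t ^ (-κ)) * Real.exp ((-1 / (θ * t)) * ‖y‖ ^ 2) := by
    funext y
    rw [hf]
    congr 1
    ring
  rw [hD, hft]
  simp only [hessEntry_gauss]
  set P := t ^ (-κ) with hP
  set EE := Real.exp (-1 / (θ * t) * ‖x‖ ^ 2) with hEE
  have hEeq : Real.exp (-‖x‖ ^ 2 / (θ * t)) = EE := by
    rw [hEE]; congr 1; ring
  rw [hEeq]
  -- sum manipulation
  set b : ℝ := -1 / (θ * t) with hb
  set Q : ℝ := ∑ i, ∑ j, A x i j * x i * x j with hQdef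
  set T : ℝ := ∑ i, A x i i with hTdef
  have hsum : (∑ i, ∑ j, A x i j *
        (P * EE * (2 * b * (if i = j then 1 else 0) + 4 * b ^ 2 * x i * x j)))
      = P * EE * (2 * b) * T + P * EE * (4 * b ^ 2) * Q := by
    have hterm : ∀ i j, A x i j *
        (P * EE * (2 * b * (if i = j then 1 else 0) + 4 * b ^ 2 * x i * x j))
        = P * EE * (2 * b) * (if i = j then A x i j else 0)
          + P * EE * (4 * b ^ 2) * (A x i j * x i * x j) := by
      intro i j
      rcases eq_or_ne i j with h | h
      · subst h; simp; ring
      · simp [h]; ring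
    simp_rw [hterm, Finset.sum_add_distrib, ← Finset.mul_sum]
    simp [hQdef, hTdef, Finset.mul_sum]
  rw [hsum]
  -- bounds
  have hT : lam * d ≤ T := by
    have hdiag : ∀ i, lam ≤ A x i i := by
      intro i
      have h := (hellip x (EuclideanSpace.single i 1)).1
      simpa [EuclideanSpace.single_apply, mul_ite, ite_mul] using h
    calc lam * d = ∑ _i : Fin d, lam := by
          simp [Finset.sum_const, Fintype.card_fin]; ring
      _ ≤ T := Finset.sum_le_sum fun i _ => hdiag i
  have hQ : Q ≤ Lam * ‖x‖ ^ 2 := (hellip x x).2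
  -- positivity
  have hPpos : 0 < P := Real.rpow_pos_of_pos ht _
  have hEpos : 0 < EE := Real.exp_pos _
  have hP1 : t ^ (-κ - 1) = P * t⁻¹ := by
    rw [hP, show -κ - 1 = -κ + (-1) by ring, Real.rpow_add ht, Real.rpow_neg_one]
  have key : 0 ≤ -κ * t⁻¹ + ‖x‖ ^ 2 / θ * (t ^ 2)⁻¹ + 2 / (θ * t) * T - 4 / (θ * t) ^ 2 * Q := by
    have k1 : 2 / (θ * t) * (lam * d) ≤ 2 / (θ * t) * T :=
      mul_le_mul_of_nonneg_left hT (by positivity)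
    have k2 : 4 / (θ * t) ^ 2 * Q ≤ 4 / (θ * t) ^ 2 * (Lam * ‖x‖ ^ 2) :=
      mul_le_mul_of_nonneg_left hQ (by positivity)
    have main : 0 ≤ -κ * t⁻¹ + ‖x‖ ^ 2 / θ * (t ^ 2)⁻¹ + 2 / (θ * t) * (lam * d)
        - 4 / (θ * t) ^ 2 * (Lam * ‖x‖ ^ 2) := by
      have e1 : 0 ≤ (2 * lam * d / θ - κ) * t⁻¹ :=
        mul_nonneg (by linarith) (inv_nonneg.2 ht.le)
      have e2 : 0 ≤ ‖x‖ ^ 2 * ((θ - 4 * Lam) / (θ ^ 2 * t ^ 2)) :=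
        mul_nonneg (by positivity) (div_nonneg (by linarith) (by positivity))
      have heq : -κ * t⁻¹ + ‖x‖ ^ 2 / θ * (t ^ 2)⁻¹ + 2 / (θ * t) * (lam * d)
          - 4 / (θ * t) ^ 2 * (Lam * ‖x‖ ^ 2)
          = (2 * lam * d / θ - κ) * t⁻¹ + ‖x‖ ^ 2 * ((θ - 4 * Lam) / (θ ^ 2 * t ^ 2)) := by
        field_simp
        ring
      linarith [heq ▸ (by linarith [e1, e2] : (0:ℝ) ≤ (2 * lam * d / θ - κ) * t⁻¹
        + ‖x‖ ^ 2 * ((θ - 4 * Lam) / (θ ^ 2 * t ^ 2)))]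
    linarith
  have hfactor : (-κ * t ^ (-κ - 1)) * EE + P * (EE * (‖x‖ ^ 2 / θ * (t ^ 2)⁻¹))
      - (P * EE * (2 * b) * T + P * EE * (4 * b ^ 2) * Q)
      = P * EE * (-κ * t⁻¹ + ‖x‖ ^ 2 / θ * (t ^ 2)⁻¹ + 2 / (θ * t) * T
        - 4 / (θ * t) ^ 2 * Q) := by
    rw [hP1, hb]
    have hθt : θ * t ≠ 0 := by positivity
    field_simp
    ring
  rw [hfactor]
  exact mul_nonneg (mul_nonneg hPpos.le hEpos.le) key
end

section
/- Let w₀ : ℝᵈ → ℝ be integrable with ∫_{ℝᵈ} w₀(x) dx = 0 and |w₀(x)| ≤ M s^{-d/2} exp(-|x|²/s) for some M, s > 0. Let P̄(t,x) = (4πt)^{-d/2} exp(-|x|²/(4t)) be the heat kernel and define w(t,x) = ∫_{ℝᵈ} w₀(y) P̄(t, x-y) dy. Then there exists a constant C depending only on d such that for every t ≥ s and x ∈ ℝᵈ, |w(t,x)| ≤ C M s^{1/2} t^{-(d+1)/2} exp(-|x|²/(16 t)). -/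
open Real MeasureTheory

private lemma exp_diff_le' (a b : ℝ) (h : a ≤ b) :
    |rexp (-a) - rexp (-b)| ≤ |a - b| * (rexp (-a) + rexp (-b)) := by
  have h1 : (a - b) + 1 ≤ rexp (a - b) := Real.add_one_le_exp _
  have h2 : rexp (-b) = rexp (-a) * rexp (a - b) := by
    rw [← Real.exp_add]; ring_nf
  have h3 : 0 ≤ rexp (-a) - rexp (-b) := by
    have := Real.exp_le_exp.2 (neg_le_neg h); linarith
  rw [abs_of_nonneg h3, abs_of_nonpos (by linarith : a - b ≤ 0)]
  nlinarith [Real.exp_pos (-a), Real.exp_pos (-b), Real.exp_pos (a - b)]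

private lemma exp_diff_le (a b : ℝ) :
    |rexp (-a) - rexp (-b)| ≤ |a - b| * (rexp (-a) + rexp (-b)) := by
  rcases le_total a b with h | h
  · exact exp_diff_le' a b h
  · have := exp_diff_le' b a h
    rw [abs_sub_comm, abs_sub_comm a b]
    linarith [this]

private lemma moment_bound (s u r : ℝ) (hs : 0 < s) (hu : 0 ≤ u) (hr : 0 ≤ r) :
    (u^2 + 2*r*u) * rexp (-(u^2/(2*s))) ≤ (4*s + 2*r*Real.sqrt s) * rexp (-(u^2/(4*s))) := by
  have hsq : Real.sqrt s ^ 2 = s := Real.sq_sqrt hs.le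
  have hsp : 0 < Real.sqrt s := Real.sqrt_pos.2 hs
  set E := rexp (u^2/(4*s)) with hE
  have hEpos : 0 < E := Real.exp_pos _
  have hE1 : 1 + u^2/(4*s) ≤ E := by
    have := Real.add_one_le_exp (u^2/(4*s)); linarith
  have hsplit : rexp (-(u^2/(2*s))) = E⁻¹ * E⁻¹ := by
    rw [← Real.exp_neg, ← Real.exp_add]; congr 1; field_simp; ring
  have hinv : rexp (-(u^2/(4*s))) = E⁻¹ := by rw [← Real.exp_neg]
  rw [hsplit, hinv]
  have hEinv : 0 < E⁻¹ := by positivity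
  have key : (u^2 + 2*r*u) * E⁻¹ ≤ 4*s + 2*r*Real.sqrt s := by
    rw [← mul_le_mul_iff_of_pos_right hEpos]
    have hIE : E⁻¹ * E = 1 := inv_mul_cancel₀ (ne_of_gt hEpos)
    have h4 : u^2 + 4*s ≤ 4*s*E := by
      have := mul_le_mul_of_nonneg_left hE1 (le_of_lt (by linarith : (0:ℝ) < 4*s))
      calc u^2 + 4*s = 4*s*(1 + u^2/(4*s)) := by field_simp; ring
        _ ≤ 4*s*E := this
    have hru : u ≤ Real.sqrt s * E := by nlinarith [sq_nonneg (u - 2*Real.sqrt s)]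
    calc (u^2 + 2*r*u) * E⁻¹ * E = u^2 + 2*r*u := by
          rw [mul_assoc, hIE, mul_one]
      _ ≤ (4*s + 2*r*Real.sqrt s) * E := by nlinarith [mul_le_mul_of_nonneg_left hru (by linarith : (0:ℝ) ≤ 2*r)]
  calc (u^2 + 2*r*u) * (E⁻¹ * E⁻¹) = ((u^2 + 2*r*u) * E⁻¹) * E⁻¹ := by ring
    _ ≤ (4*s + 2*r*Real.sqrt s) * E⁻¹ := by
        apply mul_le_mul_of_nonneg_right key (le_of_lt hEinv)

private lemma real_pt (W K r u v s t : ℝ) (hs : 0 < s) (hst : s ≤ t) (hK : 0 ≤ K)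
    (hW : 0 ≤ W) (hr : 0 ≤ r) (hu : 0 ≤ u) (hv : 0 ≤ v) (hrv : r ≤ u + v)
    (hdiff : |v^2 - r^2| ≤ u^2 + 2*r*u) :
    W * rexp (-u^2/s) * |K * rexp (-v^2/(4*t)) - K * rexp (-r^2/(4*t))| ≤
    2 * W * K / (4*t) * ((4*s + 2*r*Real.sqrt s) * rexp (-(r^2/(6*t)))) *
      rexp (-(u^2/(4*s))) := by
  have ht : 0 < t := lt_of_lt_of_le hs hst
  have habs : |K * rexp (-v^2/(4*t)) - K * rexp (-r^2/(4*t))| ≤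
      K * (((u^2 + 2*r*u)/(4*t)) * (rexp (-(v^2/(4*t))) + rexp (-(r^2/(4*t))))) := by
    have h1 : K * rexp (-v^2/(4*t)) - K * rexp (-r^2/(4*t)) =
        K * (rexp (-(v^2/(4*t))) - rexp (-(r^2/(4*t)))) := by
      rw [neg_div, neg_div]; ring
    rw [h1, abs_mul, abs_of_nonneg hK]
    apply mul_le_mul_of_nonneg_left _ hK
    calc |rexp (-(v^2/(4*t))) - rexp (-(r^2/(4*t)))| ≤
        |v^2/(4*t) - r^2/(4*t)| * (rexp (-(v^2/(4*t))) + rexp (-(r^2/(4*t)))) :=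
          exp_diff_le _ _
      _ ≤ ((u^2 + 2*r*u)/(4*t)) * (rexp (-(v^2/(4*t))) + rexp (-(r^2/(4*t)))) := by
          apply mul_le_mul_of_nonneg_right _ (by positivity)
          rw [div_sub_div_same, abs_div, abs_of_pos (by linarith : (0:ℝ) < 4*t)]
          exact div_le_div_of_nonneg_right hdiff (by linarith) |>.trans (le_refl _)
  have step2 : rexp (-u^2/s) * (rexp (-(v^2/(4*t))) + rexp (-(r^2/(4*t)))) ≤
      2 * (rexp (-(u^2/(2*s))) * rexp (-(r^2/(6*t)))) := by
    have sub1 : rexp (-u^2/s) * rexp (-(v^2/(4*t))) ≤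
        rexp (-(u^2/(2*s))) * rexp (-(r^2/(6*t))) := by
      rw [← Real.exp_add, ← Real.exp_add]
      apply Real.exp_le_exp.2
      have hA : r^2/(6*t) ≤ u^2/(2*t) + v^2/(4*t) := by
        have hr2 : r^2 ≤ (u+v)^2 := by nlinarith
        rw [div_add_div _ _ (by positivity) (by positivity),
          div_le_div_iff₀ (by positivity) (by positivity)]
        nlinarith [mul_le_mul_of_nonneg_left hr2 (le_of_lt (mul_pos ht ht)),
          mul_nonneg (mul_pos ht ht).le (sq_nonneg (2*u - v))]
      have hB : u^2/(2*t) ≤ u^2/(2*s) := by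
        apply div_le_div_of_nonneg_left (by positivity) (by positivity) (by linarith)
      have hC : u^2/(2*s) + u^2/(2*s) = u^2/s := by field_simp; ring
      have hD : -u^2/s = -(u^2/s) := by ring
      linarith [hA, hB]
    have sub2 : rexp (-u^2/s) * rexp (-(r^2/(4*t))) ≤
        rexp (-(u^2/(2*s))) * rexp (-(r^2/(6*t))) := by
      apply mul_le_mul (Real.exp_le_exp.2 ?_) (Real.exp_le_exp.2 ?_)
        (le_of_lt (Real.exp_pos _)) (le_of_lt (Real.exp_pos _))
      · have : u^2/(2*s) ≤ u^2/s := by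
          apply div_le_div_of_nonneg_left (by positivity) hs (by linarith)
        have hD : -u^2/s = -(u^2/s) := by ring
        linarith
      · have : r^2/(6*t) ≤ r^2/(4*t) := by
          apply div_le_div_of_nonneg_left (by positivity) (by positivity) (by linarith)
        linarith
    rw [mul_add]; linarith
  have hexp0 : (0:ℝ) ≤ rexp (-u^2/s) := le_of_lt (Real.exp_pos _)
  calc W * rexp (-u^2/s) * |K * rexp (-v^2/(4*t)) - K * rexp (-r^2/(4*t))|
      ≤ W * rexp (-u^2/s) *
        (K * (((u^2 + 2*r*u)/(4*t)) * (rexp (-(v^2/(4*t))) + rexp (-(r^2/(4*t)))))) := by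
        apply mul_le_mul_of_nonneg_left habs (by positivity)
    _ = W * K / (4*t) * ((u^2 + 2*r*u) *
        (rexp (-u^2/s) * (rexp (-(v^2/(4*t))) + rexp (-(r^2/(4*t)))))) := by ring
    _ ≤ W * K / (4*t) * ((u^2 + 2*r*u) *
        (2 * (rexp (-(u^2/(2*s))) * rexp (-(r^2/(6*t)))))) := by
        apply mul_le_mul_of_nonneg_left _ (by positivity)
        apply mul_le_mul_of_nonneg_left step2 (by positivity)
    _ = (2 * (W * K / (4*t)) * rexp (-(r^2/(6*t)))) *
        ((u^2 + 2*r*u) * rexp (-(u^2/(2*s)))) := by ring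
    _ ≤ (2 * (W * K / (4*t)) * rexp (-(r^2/(6*t)))) *
        ((4*s + 2*r*Real.sqrt s) * rexp (-(u^2/(4*s)))) := by
        apply mul_le_mul_of_nonneg_left (moment_bound s u r hs hu hr) (by positivity)
    _ = 2 * W * K / (4*t) * ((4*s + 2*r*Real.sqrt s) * rexp (-(r^2/(6*t)))) *
        rexp (-(u^2/(4*s))) := by ring

private lemma gauss_integral (d : ℕ) (b : ℝ) (hb : 0 < b) :
    ∫ v : EuclideanSpace ℝ (Fin d), rexp (-(‖v‖^2 / b)) = (π * b) ^ ((d:ℝ)/2) := by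
  have h : ∀ v : EuclideanSpace ℝ (Fin d), -(‖v‖^2 / b) = -(1/b) * ‖v‖^2 := by
    intro v; field_simp
  simp_rw [h]
  rw [GaussianFourier.integral_rexp_neg_mul_sq_norm (by positivity : (0:ℝ) < 1/b)]
  rw [show π / (1/b) = π * b by field_simp]
  congr 1
  simp

private lemma gauss_integrable (d : ℕ) (b : ℝ) (hb : 0 < b) :
    Integrable (fun v : EuclideanSpace ℝ (Fin d) => rexp (-(‖v‖^2 / b))) := by
  have hb' : (0:ℝ) < 1/b := by positivity
  have base := (GaussianFourier.integrable_cexp_neg_mul_sq_norm_add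
      (V := EuclideanSpace ℝ (Fin d)) (b := ((1/b : ℝ) : ℂ))
      (by simpa using hb') 0 0).norm
  refine base.congr (Filter.Eventually.of_forall fun v => ?_)
  have : ‖Complex.exp (-(((1/b : ℝ):ℂ)) * (‖v‖:ℂ)^2 + 0 * (inner ℝ 0 v : ℝ))‖
      = rexp (-(1/b) * ‖v‖^2) := by
    simp [Complex.norm_exp]
    left; norm_cast
  have e2 : rexp (-(1/b) * ‖v‖^2) = rexp (-(‖v‖^2/b)) := by
    congr 1; field_simp
  exact this.trans e2

private lemma core_exp (s t r : ℝ) (hs : 0 < s) (hst : s ≤ t) (hr : 0 ≤ r) :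
    (4*s + 2*r*Real.sqrt s) * rexp (-(r^2/(6*t))) ≤
    32 * Real.sqrt s * Real.sqrt t * rexp (-r^2/(16*t)) := by
  have ht : 0 < t := lt_of_lt_of_le hs hst
  have hsplit : rexp (-(r^2/(6*t))) = rexp (-r^2/(16*t)) * rexp (-(5*r^2/(48*t))) := by
    rw [← Real.exp_add]; congr 1; field_simp; ring
  rw [hsplit]
  have hqt : Real.sqrt t ^ 2 = t := Real.sq_sqrt ht.le
  have hqtp : 0 < Real.sqrt t := Real.sqrt_pos.2 ht
  have hqs : Real.sqrt s ^ 2 = s := Real.sq_sqrt hs.le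
  have hqsp : 0 < Real.sqrt s := Real.sqrt_pos.2 hs
  have hqst : Real.sqrt s ≤ Real.sqrt t := Real.sqrt_le_sqrt hst
  set EE := rexp (5*r^2/(48*t)) with hEE
  have hEEpos : 0 < EE := Real.exp_pos _
  have hG : rexp (-(5*r^2/(48*t))) = EE⁻¹ := by rw [hEE, ← Real.exp_neg]
  have hE1 : 1 + 5*r^2/(48*t) ≤ EE := by
    have := Real.add_one_le_exp (5*r^2/(48*t)); rw [hEE]; linarith
  have hEE1 : 1 ≤ EE := by
    have h0 : (0:ℝ) ≤ 5*r^2/(48*t) := by positivity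
    linarith
  have hE1' : 48*t + 5*r^2 ≤ 48*t*EE := by
    have h := mul_le_mul_of_nonneg_left hE1 (le_of_lt (by positivity : (0:ℝ) < 48*t))
    have h2 : 48*t*(1 + 5*r^2/(48*t)) = 48*t + 5*r^2 := by field_simp
    rw [h2] at h; exact h
  have hRE : r ≤ 2*Real.sqrt t*EE := by
    nlinarith [hE1', sq_nonneg (5*r - 12*Real.sqrt t), hqt, hqtp, hEEpos]
  have hrG : r * EE⁻¹ ≤ 2*Real.sqrt t := by
    rw [← mul_le_mul_iff_of_pos_right hEEpos]
    have hIE : EE⁻¹ * EE = 1 := inv_mul_cancel₀ (ne_of_gt hEEpos)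
    calc r * EE⁻¹ * EE = r := by rw [mul_assoc, hIE, mul_one]
      _ ≤ 2*Real.sqrt t*EE := hRE
  have hG1 : EE⁻¹ ≤ 1 := by
    rw [← hG]
    calc rexp (-(5*r^2/(48*t))) ≤ rexp 0 :=
          Real.exp_le_exp.2 (neg_nonpos.2 (by positivity))
      _ = 1 := Real.exp_zero
  have hGnn : (0:ℝ) ≤ EE⁻¹ := by positivity
  have inner : (4*s + 2*r*Real.sqrt s) * EE⁻¹ ≤ 32*Real.sqrt s*Real.sqrt t := by
    nlinarith [mul_le_mul_of_nonneg_left hrG hqsp.le,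
      mul_le_of_le_one_right hs.le hG1,
      mul_le_mul_of_nonneg_left hqst hqsp.le, hqs,
      mul_pos hqsp hqtp]
  calc (4*s + 2*r*Real.sqrt s) * (rexp (-r^2/(16*t)) * rexp (-(5*r^2/(48*t))))
      = ((4*s + 2*r*Real.sqrt s) * rexp (-(5*r^2/(48*t)))) * rexp (-r^2/(16*t)) := by ring
    _ ≤ (32*Real.sqrt s*Real.sqrt t) * rexp (-r^2/(16*t)) := by
        apply mul_le_mul_of_nonneg_right _ (le_of_lt (Real.exp_pos _))
        rw [hG]; exact inner
    _ = 32 * Real.sqrt s * Real.sqrt t * rexp (-r^2/(16*t)) := by ring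

private lemma final_arith (d : ℕ) (M s t r : ℝ) (hM : 0 < M) (hs : 0 < s)
    (hst : s ≤ t) (hr : 0 ≤ r) :
    2 * (M * s ^ (-(d:ℝ)/2)) * ((4*π*t) ^ (-(d:ℝ)/2)) / (4*t) *
      ((4*s + 2*r*Real.sqrt s) * rexp (-(r^2/(6*t)))) * ((π*(4*s)) ^ ((d:ℝ)/2))
    ≤ 16 * M * s ^ ((1:ℝ)/2) * t ^ (-((d:ℝ)+1)/2) * rexp (-r^2/(16*t)) := by
  have ht : 0 < t := lt_of_lt_of_le hs hst
  have hπ : 0 < π := Real.pi_pos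
  have h4πt : (0:ℝ) < 4*π*t := by positivity
  have h1 : s ^ ((d:ℝ)/2) ≠ 0 := ne_of_gt (Real.rpow_pos_of_pos hs _)
  have h2 : (4*π) ^ ((d:ℝ)/2) ≠ 0 := ne_of_gt (Real.rpow_pos_of_pos (by positivity) _)
  have h3 : t ^ ((d:ℝ)/2) ≠ 0 := ne_of_gt (Real.rpow_pos_of_pos ht _)
  have hcol : s ^ (-(d:ℝ)/2) * ((4*π*t) ^ (-(d:ℝ)/2)) * ((π*(4*s)) ^ ((d:ℝ)/2))
      = (t ^ ((d:ℝ)/2))⁻¹ := by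
    rw [neg_div, Real.rpow_neg hs.le, Real.rpow_neg h4πt.le,
      show π*(4*s) = (4*π)*s by ring,
      Real.mul_rpow (by positivity : (0:ℝ) ≤ 4*π) hs.le,
      Real.mul_rpow (by positivity : (0:ℝ) ≤ 4*π) ht.le]
    field_simp
  have hts : t ^ (-((d:ℝ)+1)/2) = (t ^ ((d:ℝ)/2))⁻¹ * (Real.sqrt t)⁻¹ := by
    have hx : -((d:ℝ)+1)/2 = (-((d:ℝ)/2)) + (-(1/2 : ℝ)) := by ring
    rw [hx, Real.rpow_add ht, Real.rpow_neg ht.le, Real.rpow_neg ht.le,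
      ← Real.sqrt_eq_rpow]
  have hsq : s ^ ((1:ℝ)/2) = Real.sqrt s := (Real.sqrt_eq_rpow s).symm
  have hqt : Real.sqrt t * Real.sqrt t = t := Real.mul_self_sqrt ht.le
  have hqtp : 0 < Real.sqrt t := Real.sqrt_pos.2 ht
  calc 2 * (M * s ^ (-(d:ℝ)/2)) * ((4*π*t) ^ (-(d:ℝ)/2)) / (4*t) *
      ((4*s + 2*r*Real.sqrt s) * rexp (-(r^2/(6*t)))) * ((π*(4*s)) ^ ((d:ℝ)/2))
      = (s ^ (-(d:ℝ)/2) * ((4*π*t) ^ (-(d:ℝ)/2)) * ((π*(4*s)) ^ ((d:ℝ)/2))) *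
        (M/(2*t) * ((4*s + 2*r*Real.sqrt s) * rexp (-(r^2/(6*t))))) := by ring
    _ = (t ^ ((d:ℝ)/2))⁻¹ *
        (M/(2*t) * ((4*s + 2*r*Real.sqrt s) * rexp (-(r^2/(6*t))))) := by rw [hcol]
    _ ≤ (t ^ ((d:ℝ)/2))⁻¹ *
        (M/(2*t) * (32 * Real.sqrt s * Real.sqrt t * rexp (-r^2/(16*t)))) := by
        apply mul_le_mul_of_nonneg_left _ (by positivity)
        apply mul_le_mul_of_nonneg_left (core_exp s t r hs hst hr) (by positivity)
    _ = 16 * M * s ^ ((1:ℝ)/2) * t ^ (-((d:ℝ)+1)/2) * rexp (-r^2/(16*t)) := by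
        rw [hts, hsq]
        rw [show M/(2*t) * (32 * Real.sqrt s * Real.sqrt t * rexp (-r^2/(16*t)))
            = 16 * M * Real.sqrt s * (Real.sqrt t / t) * rexp (-r^2/(16*t)) by ring]
        rw [show Real.sqrt t / t = (Real.sqrt t)⁻¹ by
          rw [← hqt]; field_simp; rw [Real.sqrt_sq hqtp.le]]
        ring

/-- Quantitative decay for heat-equation solutions with mean-zero, Gaussian-dominated
initial data: the solution decays one half-power of `t` faster than the heat kernel. -/
theorem heat_mean_zero_decay (d : ℕ) (hd : 1 ≤ d) :
    ∃ C : ℝ, 0 < C ∧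
      ∀ (w₀ : EuclideanSpace ℝ (Fin d) → ℝ) (M s : ℝ), 0 < M → 0 < s →
        Integrable w₀ →
        (∫ x, w₀ x) = 0 →
        (∀ x, |w₀ x| ≤ M * s ^ (-(d : ℝ) / 2) * Real.exp (-‖x‖ ^ 2 / s)) →
        ∀ t : ℝ, s ≤ t → ∀ x : EuclideanSpace ℝ (Fin d),
          |∫ y, w₀ y * ((4 * π * t) ^ (-(d : ℝ) / 2) * Real.exp (-‖x - y‖ ^ 2 / (4 * t)))| ≤
            C * M * s ^ ((1 : ℝ) / 2) * t ^ (-((d : ℝ) + 1) / 2) *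
              Real.exp (-‖x‖ ^ 2 / (16 * t)) := by
  refine ⟨16, by norm_num, ?_⟩
  intro w₀ M s hM hs hw₀ h0 hbd t hst x
  have ht : 0 < t := lt_of_lt_of_le hs hst
  have hπ : 0 < π := Real.pi_pos
  set K : ℝ := (4 * π * t) ^ (-(d : ℝ) / 2) with hK
  have hKpos : 0 < K := by rw [hK]; exact Real.rpow_pos_of_pos (by positivity) _
  set c : ℝ := K * rexp (-‖x‖ ^ 2 / (4 * t)) with hc
  set W : ℝ := M * s ^ (-(d : ℝ) / 2) with hW
  have hWpos : 0 < W := by rw [hW]; positivity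
  have hcont : Continuous fun y : EuclideanSpace ℝ (Fin d) =>
      K * rexp (-‖x - y‖ ^ 2 / (4 * t)) := by fun_prop
  have hPbd : ∀ y : EuclideanSpace ℝ (Fin d),
      ‖K * rexp (-‖x - y‖ ^ 2 / (4 * t))‖ ≤ K := by
    intro y
    have harg : -‖x - y‖ ^ 2 / (4 * t) ≤ 0 :=
      div_nonpos_of_nonpos_of_nonneg (neg_nonpos.2 (by positivity)) (by positivity)
    have hle1 : rexp (-‖x - y‖ ^ 2 / (4 * t)) ≤ 1 := by
      calc rexp (-‖x - y‖ ^ 2 / (4 * t)) ≤ rexp 0 := Real.exp_le_exp.2 harg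
        _ = 1 := Real.exp_zero
    rw [Real.norm_eq_abs, abs_mul, abs_of_pos hKpos, abs_of_pos (Real.exp_pos _)]
    nlinarith [Real.exp_pos (-‖x - y‖ ^ 2 / (4 * t))]
  have hP_int : Integrable (fun y => w₀ y * (K * rexp (-‖x - y‖ ^ 2 / (4 * t)))) := by
    have h1 : Integrable (fun y => (K * rexp (-‖x - y‖ ^ 2 / (4 * t))) * w₀ y) :=
      hw₀.bdd_mul hcont.aestronglyMeasurable (Filter.Eventually.of_forall hPbd)
    exact h1.congr (Filter.Eventually.of_forall fun y => mul_comm _ _)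
  have hc_int : Integrable (fun y => w₀ y * c) := hw₀.mul_const c
  have hzero : ∫ y, w₀ y * c = 0 := by rw [integral_mul_const, h0, zero_mul]
  have hsub_int : Integrable (fun y => w₀ y * (K * rexp (-‖x - y‖ ^ 2 / (4 * t)) - c)) :=
    (hP_int.sub hc_int).congr (Filter.Eventually.of_forall fun y => by
      simp only [Pi.sub_apply]; ring)
  have heq : ∫ y, w₀ y * (K * rexp (-‖x - y‖ ^ 2 / (4 * t)))
      = ∫ y, w₀ y * (K * rexp (-‖x - y‖ ^ 2 / (4 * t)) - c) := by
    have hfe : (fun y => w₀ y * (K * rexp (-‖x - y‖ ^ 2 / (4 * t)) - c)) =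
        fun y => w₀ y * (K * rexp (-‖x - y‖ ^ 2 / (4 * t))) - w₀ y * c := by
      funext y; ring
    rw [hfe, integral_sub hP_int hc_int, hzero, sub_zero]
  set A : ℝ := 2 * W * K / (4*t) *
    ((4*s + 2*‖x‖*Real.sqrt s) * rexp (-(‖x‖^2/(6*t)))) with hA
  have hpt : ∀ y, ‖w₀ y * (K * rexp (-‖x - y‖ ^ 2 / (4 * t)) - c)‖ ≤
      A * rexp (-(‖y‖^2/(4*s))) := by
    intro y
    have hdiff : |‖x - y‖^2 - ‖x‖^2| ≤ ‖y‖^2 + 2*‖x‖*‖y‖ := by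
      have hid := norm_sub_sq_real x y
      have hcs := abs_real_inner_le_norm x y
      rw [abs_le] at hcs ⊢
      constructor <;> nlinarith [hcs.1, hcs.2, sq_nonneg ‖y‖]
    have hrv : ‖x‖ ≤ ‖y‖ + ‖x - y‖ := by
      have hxe : x = y + (x - y) := by abel
      calc ‖x‖ = ‖y + (x - y)‖ := by rw [← hxe]
        _ ≤ ‖y‖ + ‖x - y‖ := norm_add_le _ _
    have main := real_pt W K ‖x‖ ‖y‖ ‖x - y‖ s t hs hst hKpos.le hWpos.le
      (norm_nonneg x) (norm_nonneg y) (norm_nonneg _) hrv hdiff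
    rw [Real.norm_eq_abs, abs_mul, hA, hc]
    calc |w₀ y| * |K * rexp (-‖x - y‖ ^ 2 / (4 * t)) - K * rexp (-‖x‖ ^ 2 / (4 * t))|
        ≤ (W * rexp (-‖y‖^2/s)) *
          |K * rexp (-‖x - y‖ ^ 2 / (4 * t)) - K * rexp (-‖x‖ ^ 2 / (4 * t))| :=
          mul_le_mul_of_nonneg_right (hbd y) (abs_nonneg _)
      _ ≤ 2 * W * K / (4*t) *
          ((4*s + 2*‖x‖*Real.sqrt s) * rexp (-(‖x‖^2/(6*t)))) *
          rexp (-(‖y‖^2/(4*s))) := main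
  have hgauss_int : Integrable
      (fun y : EuclideanSpace ℝ (Fin d) => rexp (-(‖y‖^2/(4*s)))) :=
    gauss_integrable d (4*s) (by positivity)
  have hdom_int : Integrable
      (fun y : EuclideanSpace ℝ (Fin d) => A * rexp (-(‖y‖^2/(4*s)))) :=
    hgauss_int.const_mul A
  calc |∫ y, w₀ y * (K * rexp (-‖x - y‖ ^ 2 / (4 * t)))|
      = |∫ y, w₀ y * (K * rexp (-‖x - y‖ ^ 2 / (4 * t)) - c)| := by rw [heq]
    _ ≤ ∫ y, ‖w₀ y * (K * rexp (-‖x - y‖ ^ 2 / (4 * t)) - c)‖ := by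
        rw [← Real.norm_eq_abs]; exact norm_integral_le_integral_norm _
    _ ≤ ∫ y, A * rexp (-(‖y‖^2/(4*s))) := integral_mono hsub_int.norm hdom_int hpt
    _ = A * (π * (4*s)) ^ ((d:ℝ)/2) := by
        rw [integral_const_mul, gauss_integral d (4*s) (by positivity)]
    _ ≤ 16 * M * s ^ ((1:ℝ)/2) * t ^ (-((d:ℝ)+1)/2) * rexp (-‖x‖^2/(16*t)) := by
        rw [hA, hW, hK]
        exact final_arith d M s t ‖x‖ hM hs hst (norm_nonneg x)
end

section
/- Let α ∈ (0,1]. There exists a constant C depending only on α and d such that for every f ∈ L¹(□₀) (where □₀ = (-1/2, 1/2)ᵈ is the unit cube) with mean (f)_{□₀} over □₀, the negative Hölder-dual norm satisfies ‖f - (f)_{□₀}‖_{W^{-α,1}(□₀)} ≤ C ∑_{n=-∞}^{0} 3^{nα} · (average over z in the grid 3ⁿℤᵈ ∩ □₀ of |average of (f - (f)_{□₀}) over the subcube z + □ₙ|), where □ₙ = (-3ⁿ/2, 3ⁿ/2)ᵈ and ‖g‖_{W^{-α,1}(□₀)} := sup{ ∫_{□₀} g φ : φ ∈ C^{0,α}(□₀),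 ‖φ‖_{C^{0,α}} ≤ 1 }. -/
open Real MeasureTheory

/-- The open cube centered at `c` with side length `r`. -/
def cube (d : ℕ) (c : EuclideanSpace ℝ (Fin d)) (r : ℝ) : Set (EuclideanSpace ℝ (Fin d)) :=
  {x | ∀ i, |x i - c i| < r / 2}

/-- The center of the `k`-th subcube of the triadic grid `3^{-n}ℤᵈ ∩ □₀`. -/
noncomputable def gridCenter (d n : ℕ) (k : Fin d → Fin (3 ^ n)) :
    EuclideanSpace ℝ (Fin d) :=
  (EuclideanSpace.equiv (Fin d) ℝ).symm
    (fun i => (3 : ℝ) ^ (-(n : ℝ)) * ((k i : ℝ) - ((3 : ℝ) ^ n - 1) / 2))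

namespace Multiscale

open Set

noncomputable def ρ (n : ℕ) : ℝ := ((3 : ℝ) ^ n)⁻¹

lemma ρ_pos (n : ℕ) : 0 < ρ n := by unfold ρ; positivity

lemma three_rpow_neg (n : ℕ) : (3 : ℝ) ^ (-(n : ℝ)) = ρ n := by
  rw [Real.rpow_neg (by norm_num), Real.rpow_natCast]; rfl

lemma ρ_succ (n : ℕ) : ρ (n + 1) = ρ n / 3 := by
  unfold ρ; rw [pow_succ]; field_simp

variable {d : ℕ}

lemma mem_cube {c x : EuclideanSpace ℝ (Fin d)} {r : ℝ} :
    x ∈ cube d c r ↔ ∀ i, |x i - c i| < r / 2 := Iff.rfl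

lemma cube_eq (c : EuclideanSpace ℝ (Fin d)) (r : ℝ) :
    cube d c r = ((MeasurableEquiv.toLp 2 (Fin d → ℝ)).symm) ⁻¹'
      (Set.univ.pi fun i => Set.Ioo (c i - r / 2) (c i + r / 2)) := by
  ext x
  simp only [cube, Set.mem_setOf_eq, Set.mem_preimage, Set.mem_univ_pi, Set.mem_Ioo]
  refine forall_congr' fun i => ?_
  have : ((MeasurableEquiv.toLp 2 (Fin d → ℝ)).symm) x i = x i := rfl
  rw [this, abs_lt]
  constructor <;> rintro ⟨h1, h2⟩ <;> constructor <;> linarith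

lemma measurableSet_cube (c : EuclideanSpace ℝ (Fin d)) (r : ℝ) :
    MeasurableSet (cube d c r) := by
  rw [cube_eq]
  exact ((MeasurableEquiv.toLp 2 (Fin d → ℝ)).symm).measurable
    (MeasurableSet.univ_pi fun i => measurableSet_Ioo)

lemma volume_cube (c : EuclideanSpace ℝ (Fin d)) (r : ℝ) :
    volume (cube d c r) = ENNReal.ofReal r ^ d := by
  rw [cube_eq,
    (EuclideanSpace.volume_preserving_symm_measurableEquiv_toLp (Fin d)).measure_preimage_equiv]
  rw [volume_pi_pi]
  have h : ∀ i : Fin d, volume (Set.Ioo (c i - r / 2) (c i + r / 2)) = ENNReal.ofReal r := by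
    intro i
    rw [Real.volume_Ioo]
    congr 1
    ring
  simp only [h, Finset.prod_const, Finset.card_univ, Fintype.card_fin]

lemma volume_hyperplane (i : Fin d) (a : ℝ) :
    volume {x : EuclideanSpace ℝ (Fin d) | x i = a} = 0 := by
  have h : {x : EuclideanSpace ℝ (Fin d) | x i = a} =
      ((MeasurableEquiv.toLp 2 (Fin d → ℝ)).symm) ⁻¹' {y : Fin d → ℝ | y i = a} := rfl
  rw [h, (EuclideanSpace.volume_preserving_symm_measurableEquiv_toLp (Fin d)).measure_preimage_equiv,
    volume_pi]
  exact MeasureTheory.Measure.pi_hyperplane (fun _ : Fin d => (volume : Measure ℝ)) i a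

lemma norm_le_sqrt_mul {x : EuclideanSpace ℝ (Fin d)} {b : ℝ} (hb : 0 ≤ b)
    (h : ∀ i, |x i| ≤ b) : ‖x‖ ≤ Real.sqrt d * b := by
  rw [EuclideanSpace.norm_eq]
  have h1 : ∑ i, ‖x i‖ ^ 2 ≤ ∑ _i : Fin d, b ^ 2 := by
    apply Finset.sum_le_sum
    intro i _
    rw [Real.norm_eq_abs]
    exact pow_le_pow_left₀ (abs_nonneg _) (h i) 2
  calc Real.sqrt (∑ i, ‖x i‖ ^ 2) ≤ Real.sqrt (∑ _i : Fin d, b ^ 2) := Real.sqrt_le_sqrt h1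
    _ = Real.sqrt ((d : ℝ) * b ^ 2) := by
        rw [Finset.sum_const, Finset.card_univ, Fintype.card_fin, nsmul_eq_mul]
    _ = Real.sqrt d * b := by
        rw [Real.sqrt_mul (Nat.cast_nonneg d), Real.sqrt_sq hb]

/-- center of the `j`-th subcube in the trisection of `cube d c r`. -/
noncomputable def subC (c : EuclideanSpace ℝ (Fin d)) (r : ℝ) (j : Fin d → Fin 3) :
    EuclideanSpace ℝ (Fin d) :=
  (EuclideanSpace.equiv (Fin d) ℝ).symm fun i => c i + (((j i : ℕ) : ℝ) - 1) * (r / 3)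

lemma subC_apply (c : EuclideanSpace ℝ (Fin d)) (r : ℝ) (j : Fin d → Fin 3) (i : Fin d) :
    subC c r j i = c i + (((j i : ℕ) : ℝ) - 1) * (r / 3) := rfl

lemma abs_fin3 (j : Fin 3) : |((j : ℕ) : ℝ) - 1| ≤ 1 := by
  have h1 : (j : ℕ) < 3 := j.isLt
  have h2 : ((j : ℕ) : ℝ) ≤ 2 := by exact_mod_cast Nat.lt_succ_iff.mp h1
  have h3 : (0 : ℝ) ≤ ((j : ℕ) : ℝ) := Nat.cast_nonneg _
  rw [abs_le]
  constructor <;> linarith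

lemma subC_subset {c : EuclideanSpace ℝ (Fin d)} {r : ℝ} (hr : 0 < r) (j : Fin d → Fin 3) :
    cube d (subC c r j) (r / 3) ⊆ cube d c r := by
  intro x hx i
  have h1 := hx i
  have h2 := abs_fin3 (j i)
  have h3 : x i - c i = (x i - subC c r j i) + (((j i : ℕ) : ℝ) - 1) * (r / 3) := by
    rw [subC_apply]; ring
  have h4 : |(((j i : ℕ) : ℝ) - 1) * (r / 3)| ≤ r / 3 := by
    rw [abs_mul, abs_of_pos (by linarith : (0 : ℝ) < r / 3)]
    nlinarith
  calc |x i - c i| ≤ |x i - subC c r j i| + |(((j i : ℕ) : ℝ) - 1) * (r / 3)| := by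
        rw [h3]; exact abs_add_le _ _
    _ < r / 3 / 2 + r / 3 := by linarith
    _ = r / 2 := by ring

lemma subC_disjoint {c : EuclideanSpace ℝ (Fin d)} {r : ℝ} (hr : 0 < r) :
    Pairwise (Function.onFun Disjoint fun j : Fin d → Fin 3 => cube d (subC c r j) (r / 3)) := by
  intro j j' hne
  rw [Function.onFun, Set.disjoint_left]
  intro x hx hx'
  obtain ⟨i, hi⟩ := Function.ne_iff.mp hne
  have h1 := hx i
  have h2 := hx' i
  have hsep : (1 : ℝ) ≤ |((j i : ℕ) : ℝ) - ((j' i : ℕ) : ℝ)| := by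
    have hne2 : ((j i : ℕ) : ℤ) ≠ ((j' i : ℕ) : ℤ) := by
      intro hc
      exact hi (Fin.ext (by exact_mod_cast hc))
    have h3 : (1 : ℤ) ≤ |((j i : ℕ) : ℤ) - ((j' i : ℕ) : ℤ)| :=
      Int.one_le_abs (sub_ne_zero.mpr hne2)
    exact_mod_cast h3
  have hd : subC c r j i - subC c r j' i =
      (((j i : ℕ) : ℝ) - ((j' i : ℕ) : ℝ)) * (r / 3) := by
    rw [subC_apply, subC_apply]; ring
  have h5 : r / 3 ≤ |subC c r j i - subC c r j' i| := by
    rw [hd, abs_mul, abs_of_pos (by linarith : (0 : ℝ) < r / 3)]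
    nlinarith
  have h6 : |subC c r j i - subC c r j' i| ≤
      |subC c r j i - x i| + |x i - subC c r j' i| := abs_sub_le _ _ _
  rw [abs_sub_comm] at h1
  linarith

lemma trisect {c : EuclideanSpace ℝ (Fin d)} {r : ℝ} (hr : 0 < r)
    {h : EuclideanSpace ℝ (Fin d) → ℝ} (hh : IntegrableOn h (cube d c r)) :
    ∫ x in cube d c r, h x = ∑ j : Fin d → Fin 3, ∫ x in cube d (subC c r j) (r / 3), h x := by
  classical
  have hnull : volume (cube d c r \ ⋃ j, cube d (subC c r j) (r / 3)) = 0 := by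
    have hsubset : cube d c r \ ⋃ j, cube d (subC c r j) (r / 3) ⊆
        ⋃ i, ({x : EuclideanSpace ℝ (Fin d) | x i = c i - r / 6} ∪
          {x : EuclideanSpace ℝ (Fin d) | x i = c i + r / 6}) := by
      rintro x ⟨hx, hx2⟩
      by_contra hcon
      simp only [Set.mem_iUnion, Set.mem_union, Set.mem_setOf_eq, not_exists, not_or] at hcon
      apply hx2
      refine Set.mem_iUnion.mpr ⟨fun i =>
        if x i - c i < -(r / 6) then 0 else if x i - c i < r / 6 then 1 else 2, fun i => ?_⟩
      obtain ⟨hl, hu⟩ := abs_lt.mp (hx i)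
      have hc1 : x i - c i ≠ -(r / 6) := fun hcc => (hcon i).1 (by linarith [hcc])
      have hc2 : x i - c i ≠ r / 6 := fun hcc => (hcon i).2 (by linarith [hcc])
      rw [subC_apply]
      split_ifs with ht1 ht2
      · simp only [Fin.val_zero, Nat.cast_zero]
        rw [abs_lt]
        constructor <;> nlinarith
      · simp only [Fin.val_one, Nat.cast_one]
        rw [abs_lt]
        have ht1' : -(r / 6) < x i - c i := lt_of_le_of_ne (not_lt.mp ht1) (Ne.symm hc1)
        constructor <;> nlinarith
      · simp only [Fin.val_two, Nat.cast_ofNat]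
        rw [abs_lt]
        have ht2' : r / 6 < x i - c i := lt_of_le_of_ne (not_lt.mp ht2) (Ne.symm hc2)
        constructor <;> nlinarith
    refine measure_mono_null hsubset (measure_iUnion_null fun i => measure_union_null ?_ ?_) <;>
      exact volume_hyperplane i _
  have hae : (⋃ j, cube d (subC c r j) (r / 3)) =ᵐ[volume] cube d c r := by
    rw [MeasureTheory.ae_eq_set]
    constructor
    · rw [Set.diff_eq_empty.mpr (Set.iUnion_subset fun j => subC_subset hr j)]
      exact measure_empty
    · exact hnull
  rw [← MeasureTheory.setIntegral_congr_set hae,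
    integral_iUnion_fintype (fun j => measurableSet_cube _ _) (subC_disjoint hr)
      (fun j => hh.mono_set (subC_subset hr j))]

lemma gridCenter_apply (n : ℕ) (k : Fin d → Fin (3 ^ n)) (i : Fin d) :
    gridCenter d n k i = ρ n * (((k i : ℕ) : ℝ) - ((3 : ℝ) ^ n - 1) / 2) := by
  rw [show gridCenter d n k i =
      (3 : ℝ) ^ (-(n : ℝ)) * (((k i : ℕ) : ℝ) - ((3 : ℝ) ^ n - 1) / 2) from rfl,
    three_rpow_neg]

lemma grid_subset (n : ℕ) (k : Fin d → Fin (3 ^ n)) :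
    cube d (gridCenter d n k) (ρ n) ⊆ cube d 0 1 := by
  intro x hx i
  have h1 := hx i
  have hk : ((k i : ℕ) : ℝ) ≤ (3 : ℝ) ^ n - 1 := by
    have h2 : ((k i : ℕ) : ℝ) < ((3 : ℕ) ^ n : ℕ) := by exact_mod_cast (k i).isLt
    have h3 : (((3 : ℕ) ^ n : ℕ) : ℝ) = (3 : ℝ) ^ n := by push_cast; ring
    rw [h3] at h2
    have h4 : ((k i : ℕ) : ℝ) + 1 ≤ (3 : ℝ) ^ n := by
      have := (k i).isLt
      have h5 : ((k i : ℕ) : ℕ) + 1 ≤ 3 ^ n := this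
      calc ((k i : ℕ) : ℝ) + 1 = (((k i : ℕ) + 1 : ℕ) : ℝ) := by push_cast; ring
        _ ≤ (((3 : ℕ) ^ n : ℕ) : ℝ) := by exact_mod_cast h5
        _ = (3 : ℝ) ^ n := h3
    linarith
  have h2 : |gridCenter d n k i| ≤ ρ n * (((3 : ℝ) ^ n - 1) / 2) := by
    rw [gridCenter_apply, abs_mul, abs_of_pos (ρ_pos n)]
    have habs : |((k i : ℕ) : ℝ) - ((3 : ℝ) ^ n - 1) / 2| ≤ ((3 : ℝ) ^ n - 1) / 2 := by
      rw [abs_le]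
      have h5 : (0 : ℝ) ≤ ((k i : ℕ) : ℝ) := Nat.cast_nonneg _
      have h6 : (1 : ℝ) ≤ (3 : ℝ) ^ n := one_le_pow₀ (by norm_num : (1:ℝ) ≤ 3)
      constructor <;> linarith
    exact mul_le_mul_of_nonneg_left habs (ρ_pos n).le
  have hρ3 : ρ n * (3 : ℝ) ^ n = 1 := inv_mul_cancel₀ (by positivity)
  have h0 : (0 : EuclideanSpace ℝ (Fin d)) i = 0 := rfl
  rw [h0, sub_zero]
  have h7 : |x i| ≤ |x i - gridCenter d n k i| + |gridCenter d n k i| := by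
    calc |x i| = |(x i - gridCenter d n k i) + gridCenter d n k i| := by ring_nf
      _ ≤ _ := abs_add_le _ _
  nlinarith [ρ_pos n]

lemma center_mem_cube (c : EuclideanSpace ℝ (Fin d)) {r : ℝ} (hr : 0 < r) :
    c ∈ cube d c r := by
  intro i
  simp only [sub_self, abs_zero]
  linarith

/-- Index of the `j`-th child of the grid cube indexed by `k`. -/
def child (n : ℕ) (k : Fin d → Fin (3 ^ n)) (j : Fin d → Fin 3) : Fin d → Fin (3 ^ (n + 1)) :=
  fun i => ⟨3 * (k i).val + (j i).val, by
    have h1 := (k i).isLt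
    have h2 := (j i).isLt
    have h3 : (3 : ℕ) ^ (n + 1) = 3 ^ n * 3 := pow_succ 3 n
    omega⟩

lemma subC_grid (n : ℕ) (k : Fin d → Fin (3 ^ n)) (j : Fin d → Fin 3) :
    subC (gridCenter d n k) (ρ n) j = gridCenter d (n + 1) (child n k j) := by
  ext i
  rw [subC_apply, gridCenter_apply, gridCenter_apply]
  have h3 : ((child n k j i : ℕ) : ℝ) = 3 * ((k i : ℕ) : ℝ) + ((j i : ℕ) : ℝ) := by
    have : (child n k j i : ℕ) = 3 * (k i).val + (j i).val := rfl
    rw [this]; push_cast; ring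
  rw [h3, ρ_succ]
  have hp : (3 : ℝ) ^ (n + 1) = 3 ^ n * 3 := by rw [pow_succ]
  rw [hp]
  have h9 : ρ n = ((3 : ℝ) ^ n)⁻¹ := rfl
  have h10 : (0:ℝ) < (3:ℝ)^n := by positivity
  field_simp
  ring

lemma sum_children {n : ℕ} (G : (Fin d → Fin (3 ^ (n + 1))) → ℝ) :
    ∑ k' : Fin d → Fin (3 ^ (n + 1)), G k'
      = ∑ k : Fin d → Fin (3 ^ n), ∑ j : Fin d → Fin 3, G (child n k j) := by
  classical
  have hbij : Function.Bijective
      (fun p : (Fin d → Fin (3 ^ n)) × (Fin d → Fin 3) => child n p.1 p.2) := by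
    rw [Fintype.bijective_iff_injective_and_card]
    constructor
    · intro p q hpq
      have hco : ∀ i, 3 * (p.1 i).val + (p.2 i).val = 3 * (q.1 i).val + (q.2 i).val := by
        intro i
        have := congrFun hpq i
        exact congrArg Fin.val this
      have hkj : ∀ i, (p.1 i).val = (q.1 i).val ∧ (p.2 i).val = (q.2 i).val := by
        intro i
        have h2 := (p.2 i).isLt
        have h3 := (q.2 i).isLt
        have := hco i
        omega
      ext i
      · exact (hkj i).1
      · exact (hkj i).2
    · simp only [Fintype.card_prod, Fintype.card_fun, Fintype.card_fin]
      rw [← mul_pow, ← pow_succ]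
  have h1 := Fintype.sum_bijective
    (fun p : (Fin d → Fin (3 ^ n)) × (Fin d → Fin 3) => child n p.1 p.2) hbij
    (fun p => G (child n p.1 p.2)) G fun p => rfl
  rw [← h1]
  exact Fintype.sum_prod_type' (f := fun k j => G (child n k j))

lemma trisect_grid {n : ℕ} (k : Fin d → Fin (3 ^ n)) {h : EuclideanSpace ℝ (Fin d) → ℝ}
    (hh : IntegrableOn h (cube d (gridCenter d n k) (ρ n))) :
    ∫ x in cube d (gridCenter d n k) (ρ n), h x
      = ∑ j : Fin d → Fin 3,
          ∫ x in cube d (gridCenter d (n + 1) (child n k j)) (ρ (n + 1)), h x := by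
  rw [trisect (ρ_pos n) hh]
  refine Finset.sum_congr rfl fun j _ => ?_
  rw [subC_grid, ← ρ_succ]

lemma cube_zero (k : Fin d → Fin (3 ^ 0)) :
    cube d (gridCenter d 0 k) (ρ 0) = cube d 0 1 := by
  have h1 : gridCenter d 0 k = 0 := by
    ext i
    rw [gridCenter_apply]
    have : (k i : ℕ) = 0 := by omega
    simp [this, ρ]
  have h2 : ρ 0 = 1 := by simp [ρ]
  rw [h1, h2]

instance : Subsingleton (Fin (3 ^ 0)) := by
  constructor
  intro a b
  apply Fin.ext
  have ha := a.isLt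
  have hb := b.isLt
  norm_num at ha hb
  omega

lemma integral_grid (n : ℕ) {h : EuclideanSpace ℝ (Fin d) → ℝ}
    (hh : IntegrableOn h (cube d 0 1)) :
    ∫ x in cube d 0 1, h x
      = ∑ k : Fin d → Fin (3 ^ n), ∫ x in cube d (gridCenter d n k) (ρ n), h x := by
  induction n with
  | zero =>
    rw [Fintype.sum_subsingleton _ (fun _ : Fin d => (⟨0, by norm_num⟩ : Fin (3 ^ 0)))]
    rw [cube_zero]
  | succ n ih =>
    rw [ih, sum_children (fun k' => ∫ x in cube d (gridCenter d (n+1) k') (ρ (n+1)), h x)]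
    exact Finset.sum_congr rfl fun k _ => trisect_grid k (hh.mono_set (grid_subset n k))

lemma integral_eq_vol_avg {n : ℕ} (k : Fin d → Fin (3 ^ n))
    (h : EuclideanSpace ℝ (Fin d) → ℝ) :
    ∫ x in cube d (gridCenter d n k) (ρ n), h x
      = ρ n ^ d * ⨍ x in cube d (gridCenter d n k) (ρ n), h x := by
  rw [setAverage_eq]
  have hvol : (volume (cube d (gridCenter d n k) (ρ n))).toReal = ρ n ^ d := by
    rw [volume_cube, ENNReal.toReal_pow, ENNReal.toReal_ofReal (ρ_pos n).le]
  rw [measureReal_def, hvol, smul_eq_mul]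
  have h0 : (ρ n ^ d : ℝ) ≠ 0 := pow_ne_zero d (ne_of_gt (ρ_pos n))
  field_simp

end Multiscale

open Multiscale

/-- Multiscale lemma: the `W^{-α,1}(□₀)` norm of `f - (f)_{□₀}` is controlled by the sum
over triadic scales of the averaged absolute subcube averages. -/
theorem multiscale_lemma (d : ℕ) (hd : 1 ≤ d) (α : ℝ) (hα0 : 0 < α) (hα1 : α ≤ 1) :
    ∃ C : ℝ, 0 < C ∧
      ∀ f : EuclideanSpace ℝ (Fin d) → ℝ, IntegrableOn f (cube d 0 1) →
        ∀ φ : EuclideanSpace ℝ (Fin d) → ℝ,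
          (∀ x ∈ cube d 0 1, |φ x| ≤ 1) →
          (∀ x ∈ cube d 0 1, ∀ y ∈ cube d 0 1, |φ x - φ y| ≤ ‖x - y‖ ^ α) →
          (∫ x in cube d 0 1, (f x - ⨍ y in cube d 0 1, f y) * φ x) ≤
            C * ∑' n : ℕ, (3 : ℝ) ^ (-(n : ℝ) * α) *
              ((1 / (3 : ℝ) ^ (n * d)) * ∑ k : Fin d → Fin (3 ^ n),
                |⨍ x in cube d (gridCenter d n k) ((3 : ℝ) ^ (-(n : ℝ))),
                  (f x - ⨍ y in cube d 0 1, f y)|) := by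
  classical
  have hd0 : (0 : ℝ) < Real.sqrt d :=
    Real.sqrt_pos.mpr (by exact_mod_cast Nat.lt_of_lt_of_le Nat.zero_lt_one hd)
  set s : ℝ := Real.sqrt d ^ α with hs_def
  have hs0 : 0 < s := Real.rpow_pos_of_pos hd0 α
  refine ⟨s, hs0, ?_⟩
  intro f hf φ hφ1 hφH
  set avg : ℝ := ⨍ y in cube d 0 1, f y with havg_def
  set g : EuclideanSpace ℝ (Fin d) → ℝ := fun x => f x - avg with hg_def
  have hgx : ∀ x, g x = f x - avg := fun _ => rfl
  simp only [← hgx, three_rpow_neg]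
  -- the summand
  set term : ℕ → ℝ := fun n => (3 : ℝ) ^ (-(n : ℝ) * α) *
      ((1 / (3 : ℝ) ^ (n * d)) * ∑ k : Fin d → Fin (3 ^ n),
        |⨍ x in cube d (gridCenter d n k) (ρ n), g x|) with hterm_def
  show (∫ x in cube d 0 1, g x * φ x) ≤ s * ∑' n, term n
  -- basic facts
  have hvol1 : volume (cube d 0 1) = 1 := by
    rw [volume_cube]; simp
  have hgInt : IntegrableOn g (cube d 0 1) := by
    apply hf.sub
    exact integrableOn_const (by rw [hvol1]; exact ENNReal.one_ne_top)
  have hgQ : ∀ (n : ℕ) (k : Fin d → Fin (3 ^ n)),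
      IntegrableOn g (cube d (gridCenter d n k) (ρ n)) :=
    fun n k => hgInt.mono_set (grid_subset n k)
  have hg0 : ∫ x in cube d 0 1, g x = 0 := by
    have hconst : IntegrableOn (fun _ : EuclideanSpace ℝ (Fin d) => avg) (cube d 0 1) :=
      integrableOn_const (by rw [hvol1]; exact ENNReal.one_ne_top)
    have : ∫ x in cube d 0 1, g x
        = (∫ x in cube d 0 1, f x) - ∫ _x in cube d 0 1, avg := integral_sub hf hconst
    rw [this, setIntegral_const, measureReal_def, hvol1]
    have : avg = ∫ x in cube d 0 1, f x := by
      rw [havg_def, setAverage_eq, measureReal_def, hvol1]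
      simp
    rw [this]
    simp
  set A : ℝ := ∫ x in cube d 0 1, |g x| with hA_def
  have hA0 : 0 ≤ A := setIntegral_nonneg (measurableSet_cube _ _) fun x _ => abs_nonneg _
  set P : ℕ → ℝ := fun n => ∑ k : Fin d → Fin (3 ^ n),
    |∫ x in cube d (gridCenter d n k) (ρ n), g x| with hP_def
  have hP0 : ∀ n, 0 ≤ P n := fun n => Finset.sum_nonneg fun k _ => abs_nonneg _
  -- term in canonical form
  have hterm_eq : ∀ n, term n = ρ n ^ α * P n := by
    intro n
    simp only [hterm_def]
    have e1 : (3 : ℝ) ^ (-(n : ℝ) * α) = ρ n ^ α := by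
      rw [Real.rpow_mul (by norm_num : (0:ℝ) ≤ 3), three_rpow_neg]
    have e2 : (1 / (3 : ℝ) ^ (n * d)) = (ρ n ^ d : ℝ) := by
      rw [one_div, pow_mul, ← inv_pow]
      rfl
    have e3 : ∀ k : Fin d → Fin (3 ^ n),
        ρ n ^ d * |⨍ x in cube d (gridCenter d n k) (ρ n), g x|
          = |∫ x in cube d (gridCenter d n k) (ρ n), g x| := by
      intro k
      rw [integral_eq_vol_avg k g, abs_mul, abs_of_pos (pow_pos (ρ_pos n) d)]
    simp only [hP_def]
    rw [e1, e2]
    simp only [← e3]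
    rw [← Finset.mul_sum]
  have hterm0 : ∀ n, 0 ≤ term n := by
    intro n
    rw [hterm_eq n]
    exact mul_nonneg (Real.rpow_nonneg (ρ_pos n).le α) (hP0 n)
  have hPA : ∀ n, P n ≤ A := by
    intro n
    simp only [hP_def, hA_def]
    rw [integral_grid n hgInt.abs]
    apply Finset.sum_le_sum
    intro k _
    calc |∫ x in cube d (gridCenter d n k) (ρ n), g x|
        ≤ ∫ x in cube d (gridCenter d n k) (ρ n), |g x| := by
          simpa [Real.norm_eq_abs] using
            norm_integral_le_integral_norm (μ := volume.restrict _) g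
      _ = _ := rfl
  -- geometric bound
  set q : ℝ := (3 : ℝ) ^ (-α) with hq_def
  have hq0 : 0 < q := Real.rpow_pos_of_pos (by norm_num) _
  have hq1 : q < 1 :=
    Real.rpow_lt_one_of_one_lt_of_neg (by norm_num) (by linarith)
  have hρα : ∀ n : ℕ, ρ n ^ α = q ^ n := by
    intro n
    rw [← three_rpow_neg, ← Real.rpow_natCast q n, hq_def,
      ← Real.rpow_mul (by norm_num : (0:ℝ) ≤ 3), ← Real.rpow_mul (by norm_num : (0:ℝ) ≤ 3)]
    ring_nf
  have hterm_le : ∀ n, term n ≤ q ^ n * A := by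
    intro n
    rw [hterm_eq n, hρα n]
    exact mul_le_mul_of_nonneg_left (hPA n) (pow_pos hq0 n).le
  have hsum : Summable term :=
    Summable.of_nonneg_of_le hterm0 hterm_le
      ((summable_geometric_of_lt_one hq0.le hq1).mul_right A)
  -- trivial case: integrand not integrable
  by_cases hInt : IntegrableOn (fun x => g x * φ x) (cube d 0 1)
  case neg =>
    rw [integral_undef hInt]
    exact mul_nonneg hs0.le (tsum_nonneg hterm0)
  -- main case
  -- the piecewise-constant pairing
  set T : ℕ → ℝ := fun n => ∑ k : Fin d → Fin (3 ^ n),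
    φ (gridCenter d n k) * ∫ x in cube d (gridCenter d n k) (ρ n), g x with hT_def
  have hT0 : T 0 = 0 := by
    simp only [hT_def]
    rw [Fintype.sum_subsingleton _ (fun _ : Fin d => (⟨0, by norm_num⟩ : Fin (3 ^ 0)))]
    rw [cube_zero, hg0, mul_zero]
  -- Hölder estimate between nearby points
  have hφdiff : ∀ (x y : EuclideanSpace ℝ (Fin d)), x ∈ cube d 0 1 → y ∈ cube d 0 1 →
      ∀ b : ℝ, 0 ≤ b → (∀ i, |x i - y i| ≤ b) → |φ x - φ y| ≤ s * b ^ α := by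
    intro x y hx hy b hb hxy
    have h1 : ‖x - y‖ ≤ Real.sqrt d * b := by
      apply norm_le_sqrt_mul hb
      intro i
      have : (x - y) i = x i - y i := rfl
      rw [this]
      exact hxy i
    calc |φ x - φ y| ≤ ‖x - y‖ ^ α := hφH x hx y hy
      _ ≤ (Real.sqrt d * b) ^ α :=
          Real.rpow_le_rpow (norm_nonneg _) h1 hα0.le
      _ = s * b ^ α := by
          rw [Real.mul_rpow (Real.sqrt_nonneg _) hb]
  -- telescoping estimate
  have htele : ∀ n : ℕ, |T (n + 1) - T n| ≤ s * term (n + 1) := by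
    intro n
    have hT1 : T (n + 1) = ∑ k : Fin d → Fin (3 ^ n), ∑ j : Fin d → Fin 3,
        φ (gridCenter d (n + 1) (child n k j)) *
          ∫ x in cube d (gridCenter d (n + 1) (child n k j)) (ρ (n + 1)), g x := by
      simp only [hT_def]
      exact sum_children _
    have hTn : T n = ∑ k : Fin d → Fin (3 ^ n), ∑ j : Fin d → Fin 3,
        φ (gridCenter d n k) *
          ∫ x in cube d (gridCenter d (n + 1) (child n k j)) (ρ (n + 1)), g x := by
      simp only [hT_def]
      refine Finset.sum_congr rfl fun k _ => ?_
      rw [trisect_grid k (hgQ n k), Finset.mul_sum]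
    have hdiffbd : ∀ (k : Fin d → Fin (3 ^ n)) (j : Fin d → Fin 3),
        |φ (gridCenter d (n + 1) (child n k j)) - φ (gridCenter d n k)|
          ≤ s * ρ (n + 1) ^ α := by
      intro k j
      refine hφdiff _ _ ?_ ?_ (ρ (n + 1)) (ρ_pos (n + 1)).le ?_
      · exact grid_subset (n + 1) (child n k j) (center_mem_cube _ (ρ_pos (n + 1)))
      · exact grid_subset n k (center_mem_cube _ (ρ_pos n))
      · intro i
        have h1 : gridCenter d (n + 1) (child n k j) i - gridCenter d n k i
            = (((j i : ℕ) : ℝ) - 1) * (ρ n / 3) := by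
          rw [← subC_grid, subC_apply]
          ring
        rw [h1, ρ_succ, abs_mul, abs_of_pos (by linarith [ρ_pos n] : (0:ℝ) < ρ n / 3)]
        have h2 := abs_fin3 (j i)
        nlinarith [ρ_pos n]
    calc |T (n + 1) - T n|
        = |∑ k : Fin d → Fin (3 ^ n), ∑ j : Fin d → Fin 3,
            (φ (gridCenter d (n + 1) (child n k j)) - φ (gridCenter d n k)) *
              ∫ x in cube d (gridCenter d (n + 1) (child n k j)) (ρ (n + 1)), g x| := by
          rw [hT1, hTn, ← Finset.sum_sub_distrib]
          congr 1
          refine Finset.sum_congr rfl fun k _ => ?_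
          rw [← Finset.sum_sub_distrib]
          refine Finset.sum_congr rfl fun j _ => ?_
          ring
      _ ≤ ∑ k : Fin d → Fin (3 ^ n), ∑ j : Fin d → Fin 3,
            (s * ρ (n + 1) ^ α) *
              |∫ x in cube d (gridCenter d (n + 1) (child n k j)) (ρ (n + 1)), g x| := by
          refine (Finset.abs_sum_le_sum_abs _ _).trans (Finset.sum_le_sum fun k _ => ?_)
          refine (Finset.abs_sum_le_sum_abs _ _).trans (Finset.sum_le_sum fun j _ => ?_)
          rw [abs_mul]
          exact mul_le_mul_of_nonneg_right (hdiffbd k j) (abs_nonneg _)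
      _ = (s * ρ (n + 1) ^ α) * P (n + 1) := by
          simp only [hP_def]
          rw [sum_children (fun k' : Fin d → Fin (3 ^ (n + 1)) =>
            |∫ x in cube d (gridCenter d (n + 1) k') (ρ (n + 1)), g x|), Finset.mul_sum]
          refine Finset.sum_congr rfl fun k _ => ?_
          rw [Finset.mul_sum]
      _ = s * term (n + 1) := by
          rw [hterm_eq (n + 1)]
          ring
  -- remainder estimate
  have hrem : ∀ n : ℕ,
      |(∫ x in cube d 0 1, g x * φ x) - T n| ≤ s * (ρ n ^ α * A) := by
    intro n
    have hsplit : ∫ x in cube d 0 1, g x * φ x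
        = ∑ k : Fin d → Fin (3 ^ n),
            ∫ x in cube d (gridCenter d n k) (ρ n), g x * φ x :=
      integral_grid n hInt
    have hptbd : ∀ (k : Fin d → Fin (3 ^ n)),
        |(∫ x in cube d (gridCenter d n k) (ρ n), g x * φ x)
            - φ (gridCenter d n k) * ∫ x in cube d (gridCenter d n k) (ρ n), g x|
          ≤ (s * ρ n ^ α) * ∫ x in cube d (gridCenter d n k) (ρ n), |g x| := by
      intro k
      have hQsub := grid_subset n k
      have hgφQ : IntegrableOn (fun x => g x * φ x) (cube d (gridCenter d n k) (ρ n)) :=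
        hInt.mono_set hQsub
      have hcQ : IntegrableOn (fun x => φ (gridCenter d n k) * g x)
          (cube d (gridCenter d n k) (ρ n)) := (hgQ n k).const_mul _
      have h1 : φ (gridCenter d n k) * ∫ x in cube d (gridCenter d n k) (ρ n), g x
          = ∫ x in cube d (gridCenter d n k) (ρ n), φ (gridCenter d n k) * g x := by
        rw [integral_const_mul]
      rw [h1, ← integral_sub hgφQ hcQ]
      have h2 : ∀ x, g x * φ x - φ (gridCenter d n k) * g x
          = g x * (φ x - φ (gridCenter d n k)) := fun x => by ring
      simp only [h2]
      have hbd : IntegrableOn (fun x => |g x| * (s * ρ n ^ α))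
          (cube d (gridCenter d n k) (ρ n)) := (hgQ n k).abs.mul_const _
      have hae : ∀ᵐ x ∂(volume.restrict (cube d (gridCenter d n k) (ρ n))),
          ‖g x * (φ x - φ (gridCenter d n k))‖ ≤ |g x| * (s * ρ n ^ α) := by
        rw [ae_restrict_iff' (measurableSet_cube _ _)]
        apply Filter.Eventually.of_forall
        intro x hx
        rw [Real.norm_eq_abs, abs_mul]
        have h5 : |φ x - φ (gridCenter d n k)| ≤ s * ρ n ^ α := by
          apply hφdiff _ _ (hQsub hx) (grid_subset n k (center_mem_cube _ (ρ_pos n)))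
            (ρ n) (ρ_pos n).le
          intro i
          have h4 := ρ_pos n
          calc |x i - gridCenter d n k i| ≤ ρ n / 2 := (hx i).le
            _ ≤ ρ n := by linarith
        exact mul_le_mul_of_nonneg_left h5 (abs_nonneg _)
      calc |∫ x in cube d (gridCenter d n k) (ρ n), g x * (φ x - φ (gridCenter d n k))|
          ≤ ∫ x in cube d (gridCenter d n k) (ρ n), |g x| * (s * ρ n ^ α) := by
            simpa [Real.norm_eq_abs] using norm_integral_le_of_norm_le hbd hae
        _ = (s * ρ n ^ α) * ∫ x in cube d (gridCenter d n k) (ρ n), |g x| := by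
            rw [integral_mul_const]
            ring
    calc |(∫ x in cube d 0 1, g x * φ x) - T n|
        = |∑ k : Fin d → Fin (3 ^ n),
            ((∫ x in cube d (gridCenter d n k) (ρ n), g x * φ x)
              - φ (gridCenter d n k) * ∫ x in cube d (gridCenter d n k) (ρ n), g x)| := by
          rw [hsplit]
          simp only [hT_def]
          rw [← Finset.sum_sub_distrib]
      _ ≤ ∑ k : Fin d → Fin (3 ^ n),
            (s * ρ n ^ α) * ∫ x in cube d (gridCenter d n k) (ρ n), |g x| :=
          (Finset.abs_sum_le_sum_abs _ _).trans (Finset.sum_le_sum fun k _ => hptbd k)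
      _ = s * (ρ n ^ α * A) := by
          rw [← Finset.mul_sum, hA_def, integral_grid n hgInt.abs]
          ring
  -- partial sums bounded by the full sum
  have hpartial : ∀ n : ℕ, ∑ m ∈ Finset.range n, term (m + 1) ≤ ∑' m, term m := by
    intro n
    have hsum1 : Summable fun m => term (m + 1) := by
      rw [summable_nat_add_iff]
      exact hsum
    calc ∑ m ∈ Finset.range n, term (m + 1)
        ≤ ∑' m, term (m + 1) := Summable.sum_le_tsum _ (fun m _ => hterm0 _) hsum1
      _ ≤ ∑' m, term m := by
          apply Summable.tsum_le_tsum_of_inj (fun m => m + 1)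
            (add_left_injective 1) (fun c _ => hterm0 c) (fun m => le_rfl) hsum1 hsum
  -- combine
  have hkey : ∀ n : ℕ, (∫ x in cube d 0 1, g x * φ x)
      ≤ s * ∑' m, term m + s * (q ^ n * A) := by
    intro n
    have h1 : T n = ∑ m ∈ Finset.range n, (T (m + 1) - T m) := by
      rw [Finset.sum_range_sub T n, hT0, sub_zero]
    have h2 : T n ≤ s * ∑' m, term m := by
      rw [h1]
      calc ∑ m ∈ Finset.range n, (T (m + 1) - T m)
          ≤ ∑ m ∈ Finset.range n, s * term (m + 1) :=
            Finset.sum_le_sum fun m _ => (le_abs_self _).trans (htele m)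
        _ = s * ∑ m ∈ Finset.range n, term (m + 1) := by rw [Finset.mul_sum]
        _ ≤ s * ∑' m, term m := mul_le_mul_of_nonneg_left (hpartial n) hs0.le
    have h3 : (∫ x in cube d 0 1, g x * φ x) - T n ≤ s * (ρ n ^ α * A) :=
      (le_abs_self _).trans (hrem n)
    rw [hρα n] at h3
    linarith
  -- pass to the limit
  have hlim : Filter.Tendsto (fun n : ℕ => s * ∑' m, term m + s * (q ^ n * A))
      Filter.atTop (nhds (s * ∑' m, term m)) := by
    have h1 : Filter.Tendsto (fun n : ℕ => s * (q ^ n * A)) Filter.atTop (nhds 0) := by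
      have := ((tendsto_pow_atTop_nhds_zero_of_lt_one hq0.le hq1).mul_const A).const_mul s
      simpa using this
    have := Filter.Tendsto.add (tendsto_const_nhds
      (x := s * ∑' m, term m) (f := Filter.atTop)) h1
    simpa using this
  exact ge_of_tendsto' hlim hkey
end

section
/- Fix λ ≤ Λ positive and d ≥ 2, and let A(x) = λ(I - x⊗x/|x|²) + Λ (x⊗x/|x|²) for x ∈ ℝᵈ \ {0}. Define m(x) = |x|^{-γ} with γ = (d-1)(Λ-λ)/Λ. Then for every j ∈ {1,…,d} and every x ≠ 0, ∑_{i=1}^{d} ∂_i (A_{ij}(x) m(x)) = 0; in particular m is a weak solution on ℝᵈ \ {0} of the doubly-divergence-form equation ∑_{i,j} ∂_i ∂_j (A_{ij} m) = 0. -/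
open Real

/-- For `A(x) = λ(I - x⊗x/|x|²) + Λ x⊗x/|x|²` and `m(x) = |x|^{-γ}` with
`γ = (d-1)(Λ-λ)/Λ`, one has `∑_i ∂_i (A_{ij} m) = 0` away from the origin. -/
theorem invariant_measure_counterexample (d : ℕ) (hd : 2 ≤ d)
    (lam Lam : ℝ) (hlam : 0 < lam) (hle : lam ≤ Lam)
    (A : EuclideanSpace ℝ (Fin d) → Matrix (Fin d) (Fin d) ℝ)
    (hA : ∀ x : EuclideanSpace ℝ (Fin d), x ≠ 0 → ∀ i j,
      A x i j = lam * ((if i = j then (1 : ℝ) else 0) - x i * x j / ‖x‖ ^ 2) +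
        Lam * (x i * x j / ‖x‖ ^ 2))
    (γ : ℝ) (hγ : γ = ((d : ℝ) - 1) * (Lam - lam) / Lam)
    (m : EuclideanSpace ℝ (Fin d) → ℝ) (hm : ∀ x, m x = ‖x‖ ^ (-γ)) :
    ∀ j : Fin d, ∀ x : EuclideanSpace ℝ (Fin d), x ≠ 0 →
      ∑ i, fderiv ℝ (fun y => A y i j * m y) x (EuclideanSpace.single i 1) = 0 := by
  intro j x hx
  have hx0 : (0:ℝ) < ‖x‖ := norm_pos_iff.mpr hx
  have hN : (0:ℝ) < ‖x‖ ^ 2 := by positivity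
  have hLam : (0:ℝ) < Lam := lt_of_lt_of_le hlam hle
  set c : ℝ := (-γ - 2) / 2 with hc
  have hB : HasFDerivAt (fun y : EuclideanSpace ℝ (Fin d) => ‖y‖ ^ 2) (2 • (innerSL ℝ x)) x :=
    (hasStrictFDerivAt_norm_sq x).hasFDerivAt
  have hpow : ∀ e : ℝ, HasFDerivAt (fun y : EuclideanSpace ℝ (Fin d) => (‖y‖ ^ 2) ^ e)
      ((e * (‖x‖ ^ 2) ^ (e - 1)) • (2 • (innerSL ℝ x))) x := fun e =>
    by have := (Real.hasDerivAt_rpow_const (p := e) (Or.inl hN.ne')).comp_hasFDerivAt x hB; exact this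
  have hproj : ∀ k : Fin d, HasFDerivAt (𝕜 := ℝ) (E := EuclideanSpace ℝ (Fin d)) (F := ℝ)
      (fun y => y k) (EuclideanSpace.proj k) x := fun k =>
    (EuclideanSpace.proj k : EuclideanSpace ℝ (Fin d) →L[ℝ] ℝ).hasFDerivAt
  have hg : ∀ i : Fin d, HasFDerivAt
      (fun y : EuclideanSpace ℝ (Fin d) =>
        (lam * (if i = j then (1:ℝ) else 0)) * (‖y‖ ^ 2) ^ ((-γ)/2)
          + (Lam - lam) * ((y i * y j) * (‖y‖ ^ 2) ^ c))
      ((lam * (if i = j then (1:ℝ) else 0)) •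
          (((-γ)/2 * (‖x‖ ^ 2) ^ ((-γ)/2 - 1)) • (2 • (innerSL ℝ x)))
        + (Lam - lam) • ((x i * x j) • ((c * (‖x‖ ^ 2) ^ (c - 1)) • (2 • (innerSL ℝ x)))
            + ((‖x‖ ^ 2) ^ c) • (x i • (EuclideanSpace.proj j : EuclideanSpace ℝ (Fin d) →L[ℝ] ℝ)
               + x j • (EuclideanSpace.proj i : EuclideanSpace ℝ (Fin d) →L[ℝ] ℝ)))) x := fun i =>
    ((hpow ((-γ)/2)).const_mul _).add ((((hproj i).mul (hproj j)).mul (hpow c)).const_mul _)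
  have key : ∀ i : Fin d, (fun y => A y i j * m y) =ᶠ[nhds x]
      (fun y : EuclideanSpace ℝ (Fin d) =>
        (lam * (if i = j then (1:ℝ) else 0)) * (‖y‖ ^ 2) ^ ((-γ)/2)
          + (Lam - lam) * ((y i * y j) * (‖y‖ ^ 2) ^ c)) := by
    intro i
    filter_upwards [eventually_ne_nhds hx] with y hy
    have h0 : (0:ℝ) < ‖y‖ := norm_pos_iff.mpr hy
    have hsq : ∀ e : ℝ, ((‖y‖ : ℝ) ^ 2) ^ e = ‖y‖ ^ (2 * e) := fun e => by
      rw [← Real.rpow_natCast ‖y‖ 2, ← Real.rpow_mul h0.le]; norm_num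
    have e1 : ((‖y‖:ℝ) ^ 2) ^ ((-γ)/2) = ‖y‖ ^ (-γ) := by
      rw [hsq]; congr 1; ring
    have e2 : ((‖y‖:ℝ) ^ 2) ^ c = ‖y‖ ^ (-γ) / ‖y‖ ^ 2 := by
      rw [hsq, eq_div_iff (by positivity : ((‖y‖:ℝ) ^ 2) ≠ 0),
        ← Real.rpow_natCast ‖y‖ 2, ← Real.rpow_add h0]
      congr 1
      rw [hc]; push_cast; ring
    rw [hA y hy, hm y, e1, e2]
    by_cases h : i = j <;> simp only [h, if_true, if_false] <;> field_simp <;> ring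
  have hce : (-γ)/2 - 1 = c := by rw [hc]; ring
  have happ1 : (innerSL ℝ x : EuclideanSpace ℝ (Fin d) →L[ℝ] ℝ)
      = fun v => (innerSL ℝ x) v := rfl
  have hF : ∀ i : Fin d,
      fderiv ℝ (fun y => A y i j * m y) x (EuclideanSpace.single i 1)
        = (if i = j then lam * (-γ) * (‖x‖ ^ 2) ^ c * x j
              + (Lam - lam) * (‖x‖ ^ 2) ^ c * x j else 0)
          + ((Lam - lam) * x j * (2 * c) * (‖x‖ ^ 2) ^ (c - 1)) * (x i * x i)
          + (Lam - lam) * (‖x‖ ^ 2) ^ c * x j := by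
    intro i
    rw [((hg i).congr_of_eventuallyEq (key i)).fderiv, hce]
    have ha : (innerSL ℝ x) (EuclideanSpace.single i 1) = x i := by
      simp [EuclideanSpace.inner_single_right]
    have hb : ∀ k : Fin d, (EuclideanSpace.proj k : EuclideanSpace ℝ (Fin d) →L[ℝ] ℝ)
        (EuclideanSpace.single i 1) = if k = i then 1 else 0 := fun k => by
      simp [EuclideanSpace.single_apply]
    simp only [ContinuousLinearMap.add_apply, ContinuousLinearMap.smul_apply, ha, hb,
      smul_eq_mul, nsmul_eq_mul, Nat.cast_ofNat]
    by_cases h : i = j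
    · subst h; simp; ring
    · simp only [h, if_false, if_true, Ne.symm h, mul_zero, mul_one, zero_mul, zero_add, add_zero]
      ring
  simp only [hF]
  rw [Finset.sum_add_distrib, Finset.sum_add_distrib, Finset.sum_ite_eq' Finset.univ j,
    ← Finset.mul_sum]
  have hnorm : ∑ i, x i * x i = ‖x‖ ^ 2 := by
    rw [← real_inner_self_eq_norm_sq, PiLp.inner_apply]; simp [RCLike.inner_apply, sq]
  rw [hnorm, Finset.sum_const, Finset.card_univ, Fintype.card_fin, nsmul_eq_mul]
  have hQP : (‖x‖ ^ 2 : ℝ) ^ (c - 1) * ‖x‖ ^ 2 = (‖x‖ ^ 2) ^ c := by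
    have h := (Real.rpow_add hN (c-1) 1).symm
    rw [Real.rpow_one] at h
    rw [h]; norm_num
  have hγLam : γ * Lam = ((d:ℝ) - 1) * (Lam - lam) := by
    rw [hγ]; field_simp
  simp only [Finset.mem_univ, if_true]
  linear_combination ((Lam - lam) * x j * (2*c)) * hQP
    + (2*(Lam - lam) * x j * ((‖x‖ ^ 2:ℝ) ^ c)) * hc - (x j * ((‖x‖ ^ 2:ℝ) ^ c)) * hγLam
end
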